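/- For every b ≥ 1, B(b) − A(b) ≤ (1 − (1−γ)·A(b))/(1 − γ + γ·λ0), and moreover B(b) − A(b) < 1/(γ·λ0). -/

import Mathlib

/-- Action-value for sensing (`u = 0`). -/
noncomputable def Q0 (γ lam0 c0 : ℝ) (V : ℕ → ℕ → ℝ) (m b : ℕ) : ℝ :=
  (m : ℝ) + c0 + γ * (lam0 * V (m + 1) 1 + (1 - lam0) * V (m + 1) (b + 1))

/-- Action-value for communication (`u = 1`). -/
noncomputable def Q1 (γ lam1 c1 : ℝ) (V : ℕ → ℕ → ℝ) (m b : ℕ) : ℝ :=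
  (m : ℝ) + c1 + γ * (lam1 * V (b + 1) (b + 1) + (1 - lam1) * V (m + 1) (b + 1))

/-- Action-value for joint sensing and communication (`u = 2`). -/
noncomputable def Q2 (γ lam2 c2 : ℝ) (V : ℕ → ℕ → ℝ) (m b : ℕ) : ℝ :=
  (m : ℝ) + c2 + γ * (lam2 * V (b + 1) 1 + (1 - lam2) * V (m + 1) (b + 1))

/-- The Bellman operator `T`. -/
noncomputable def Tbell (γ lam0 lam1 lam2 c0 c1 c2 : ℝ) (V : ℕ → ℕ → ℝ) (m b : ℕ) : ℝ :=
  min (Q0 γ lam0 c0 V m b) (min (Q1 γ lam1 c1 V m b) (Q2 γ lam2 c2 V m b))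

/-!
The Bellman operator is a `γρ`-contraction for the weighted norm, so value iteration from `0`
converges pointwise to `V★`. Monotonicity on `S`, concavity in `m` and concavity along the diagonal
are preserved by `T` and by pointwise limits, hence hold for `V★`. On the diagonal, monotonicity
makes sensing optimal: `V★(b,b) = Q0(V★)(b,b)`, while `V★(b+1,b+1) ≤ Q0(V★)(b+1,b+1)`. Subtracting
and using `B(b+1) ≤ B(b)` gives `(1 - γ + γλ0) B(b) ≤ 1 + γλ0 A(b)`, which rearranges to both
bounds since `A(b) ≥ 0`.
-/

open Filter Topology

structure IsMonotoneConcave (V : ℕ → ℕ → ℝ) : Prop where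
  mono : ∀ b b' m m' : ℕ, 1 ≤ b → b ≤ b' → b' ≤ m → m ≤ m' → V m b ≤ V m' b'
  concave_fst : ∀ m b : ℕ, 1 ≤ b → b ≤ m → V (m + 2) b + V m b ≤ 2 * V (m + 1) b
  concave_diag : ∀ k : ℕ, 1 ≤ k → V (k + 2) (k + 2) + V k k ≤ 2 * V (k + 1) (k + 1)

theorem isMonotoneConcave_zero : IsMonotoneConcave 0 where
  mono _ _ _ _ _ _ _ _ := le_rfl
  concave_fst _ _ _ _ := by simp
  concave_diag _ _ := by simp

theorem IsMonotoneConcave.of_tendsto {W : ℕ → ℕ → ℕ → ℝ} {V : ℕ → ℕ → ℝ}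
    (hW : ∀ n, IsMonotoneConcave (W n))
    (hlim : ∀ m b : ℕ, 1 ≤ b → b ≤ m → Tendsto (fun n ↦ W n m b) atTop (𝓝 (V m b))) :
    IsMonotoneConcave V where
  mono b b' m m' h1 h2 h3 h4 :=
    le_of_tendsto_of_tendsto' (hlim m b h1 (h2.trans h3)) (hlim m' b' (h1.trans h2) (h3.trans h4))
      fun n ↦ (hW n).mono b b' m m' h1 h2 h3 h4
  concave_fst m b h1 h2 :=
    le_of_tendsto_of_tendsto' ((hlim _ _ h1 (by omega)).add (hlim m b h1 h2))
      ((hlim _ _ h1 (by omega)).const_mul 2) fun n ↦ (hW n).concave_fst m b h1 h2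
  concave_diag k hk :=
    le_of_tendsto_of_tendsto' ((hlim _ _ (by omega) le_rfl).add (hlim k k hk le_rfl))
      ((hlim _ _ (by omega) le_rfl).const_mul 2) fun n ↦ (hW n).concave_diag k hk

theorem min3_add_min3_le_two_mul {a₀ a₁ a₂ d₀ d₁ d₂ e₀ e₁ e₂ : ℝ}
    (h₀ : a₀ + d₀ ≤ 2 * e₀) (h₁ : a₁ + d₁ ≤ 2 * e₁) (h₂ : a₂ + d₂ ≤ 2 * e₂) :
    min a₀ (min a₁ a₂) + min d₀ (min d₁ d₂) ≤ 2 * min e₀ (min e₁ e₂) := by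
  rw [mul_min_of_nonneg _ _ zero_le_two, mul_min_of_nonneg _ _ zero_le_two]
  refine le_min ?_ (le_min ?_ ?_)
  · exact (add_le_add (min_le_left _ _) (min_le_left _ _)).trans h₀
  · exact (add_le_add ((min_le_right _ _).trans (min_le_left _ _))
      ((min_le_right _ _).trans (min_le_left _ _))).trans h₁
  · exact (add_le_add ((min_le_right _ _).trans (min_le_right _ _))
      ((min_le_right _ _).trans (min_le_right _ _))).trans h₂

theorem abs_convexComb_le {t a b E : ℝ} (ht₀ : 0 ≤ t) (ht₁ : t ≤ 1)
    (ha : |a| ≤ E) (hb : |b| ≤ E) : |t * a + (1 - t) * b| ≤ E :=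
  calc |t * a + (1 - t) * b| ≤ |t * a| + |(1 - t) * b| := abs_add_le _ _
    _ = t * |a| + (1 - t) * |b| := by
      rw [abs_mul, abs_mul, abs_of_nonneg ht₀, abs_of_nonneg (sub_nonneg.2 ht₁)]
    _ ≤ t * E + (1 - t) * E := by gcongr
    _ = E := by ring

section Bellman

variable {γ lam0 lam1 lam2 c0 c1 c2 : ℝ}

theorem Tbell_mono (hγ : 0 ≤ γ) (hl0 : 0 ≤ lam0) (hl0' : lam0 ≤ 1) (hl1 : 0 ≤ lam1)
    (hl1' : lam1 ≤ 1) (hl2 : 0 ≤ lam2) (hl2' : lam2 ≤ 1) {V : ℕ → ℕ → ℝ}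
    (hV : IsMonotoneConcave V) {b b' m m' : ℕ} (h1 : 1 ≤ b) (h2 : b ≤ b') (h3 : b' ≤ m)
    (h4 : m ≤ m') :
    Tbell γ lam0 lam1 lam2 c0 c1 c2 V m b ≤ Tbell γ lam0 lam1 lam2 c0 c1 c2 V m' b' := by
  have hm : (m : ℝ) ≤ m' := Nat.cast_le.2 h4
  have e1 : V (m + 1) 1 ≤ V (m' + 1) 1 := hV.mono 1 1 _ _ le_rfl le_rfl (by omega) (by omega)
  have e2 : V (m + 1) (b + 1) ≤ V (m' + 1) (b' + 1) :=
    hV.mono _ _ _ _ (by omega) (by omega) (by omega) (by omega)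
  have e3 : V (b + 1) (b + 1) ≤ V (b' + 1) (b' + 1) :=
    (hV.mono _ _ _ _ (by omega) le_rfl le_rfl (by omega)).trans
      (hV.mono _ _ _ _ (by omega) (by omega) le_rfl le_rfl)
  have e4 : V (b + 1) 1 ≤ V (b' + 1) 1 := hV.mono 1 1 _ _ le_rfl le_rfl (by omega) (by omega)
  refine min_le_min ?_ (min_le_min ?_ ?_) <;> simp only [Q0, Q1, Q2] <;> gcongr

theorem Tbell_concave_fst (hγ : 0 ≤ γ) (hl0 : 0 ≤ lam0) (hl0' : lam0 ≤ 1)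
    (hl1' : lam1 ≤ 1) (hl2' : lam2 ≤ 1) {V : ℕ → ℕ → ℝ}
    (hV : IsMonotoneConcave V) {m b : ℕ} (hb : 1 ≤ b) (hbm : b ≤ m) :
    Tbell γ lam0 lam1 lam2 c0 c1 c2 V (m + 2) b + Tbell γ lam0 lam1 lam2 c0 c1 c2 V m b ≤
      2 * Tbell γ lam0 lam1 lam2 c0 c1 c2 V (m + 1) b := by
  have e1 := hV.concave_fst (m + 1) 1 le_rfl (by omega)
  have e2 := hV.concave_fst (m + 1) (b + 1) (by omega) (by omega)
  apply min3_add_min3_le_two_mul <;> simp only [Q0, Q1, Q2] <;> push_cast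
  · linarith [mul_le_mul_of_nonneg_left e1 (mul_nonneg hγ hl0),
      mul_le_mul_of_nonneg_left e2 (mul_nonneg hγ (sub_nonneg.2 hl0'))]
  · linarith [mul_le_mul_of_nonneg_left e2 (mul_nonneg hγ (sub_nonneg.2 hl1'))]
  · linarith [mul_le_mul_of_nonneg_left e2 (mul_nonneg hγ (sub_nonneg.2 hl2'))]

theorem Tbell_concave_diag (hγ : 0 ≤ γ) (hl0 : 0 ≤ lam0) (hl0' : lam0 ≤ 1)
    (hl2 : 0 ≤ lam2) (hl2' : lam2 ≤ 1) {V : ℕ → ℕ → ℝ}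
    (hV : IsMonotoneConcave V) {k : ℕ} (hk : 1 ≤ k) :
    Tbell γ lam0 lam1 lam2 c0 c1 c2 V (k + 2) (k + 2) + Tbell γ lam0 lam1 lam2 c0 c1 c2 V k k ≤
      2 * Tbell γ lam0 lam1 lam2 c0 c1 c2 V (k + 1) (k + 1) := by
  have e1 := hV.concave_fst (k + 1) 1 le_rfl (by omega)
  have e2 := hV.concave_diag (k + 1) (by omega)
  apply min3_add_min3_le_two_mul <;> simp only [Q0, Q1, Q2] <;> push_cast
  · linarith [mul_le_mul_of_nonneg_left e1 (mul_nonneg hγ hl0),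
      mul_le_mul_of_nonneg_left e2 (mul_nonneg hγ (sub_nonneg.2 hl0'))]
  · linarith [mul_le_mul_of_nonneg_left e2 hγ]
  · linarith [mul_le_mul_of_nonneg_left e1 (mul_nonneg hγ hl2),
      mul_le_mul_of_nonneg_left e2 (mul_nonneg hγ (sub_nonneg.2 hl2'))]

theorem IsMonotoneConcave.Tbell (hγ : 0 ≤ γ) (hl0 : 0 ≤ lam0) (hl0' : lam0 ≤ 1)
    (hl1 : 0 ≤ lam1) (hl1' : lam1 ≤ 1) (hl2 : 0 ≤ lam2) (hl2' : lam2 ≤ 1) {V : ℕ → ℕ → ℝ}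
    (hV : IsMonotoneConcave V) : IsMonotoneConcave (Tbell γ lam0 lam1 lam2 c0 c1 c2 V) where
  mono _ _ _ _ := Tbell_mono hγ hl0 hl0' hl1 hl1' hl2 hl2' hV
  concave_fst _ _ := Tbell_concave_fst hγ hl0 hl0' hl1' hl2' hV
  concave_diag _ := Tbell_concave_diag hγ hl0 hl0' hl2 hl2' hV

theorem abs_Tbell_sub_Tbell_le (hγ : 0 ≤ γ) (hl0 : 0 ≤ lam0) (hl0' : lam0 ≤ 1)
    (hl1 : 0 ≤ lam1) (hl1' : lam1 ≤ 1) (hl2 : 0 ≤ lam2) (hl2' : lam2 ≤ 1) {ρ E : ℝ}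
    (hρ : 1 ≤ ρ) (hE : 0 ≤ E) {V U : ℕ → ℕ → ℝ}
    (hVU : ∀ m b : ℕ, 1 ≤ b → b ≤ m → |V m b - U m b| ≤ E * ρ ^ m) {m b : ℕ}
    (hb : 1 ≤ b) (hbm : b ≤ m) :
    |Tbell γ lam0 lam1 lam2 c0 c1 c2 V m b - Tbell γ lam0 lam1 lam2 c0 c1 c2 U m b| ≤
      γ * (E * ρ ^ (m + 1)) := by
  have near : ∀ m' b' : ℕ, 1 ≤ b' → b' ≤ m' → m' ≤ m + 1 →
      |V m' b' - U m' b'| ≤ E * ρ ^ (m + 1) := fun m' b' h1 h2 h3 ↦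
    (hVU m' b' h1 h2).trans (by gcongr)
  have mix : ∀ t : ℝ, 0 ≤ t → t ≤ 1 → ∀ m₁ b₁ m₂ b₂ : ℕ, 1 ≤ b₁ → b₁ ≤ m₁ → m₁ ≤ m + 1 →
      1 ≤ b₂ → b₂ ≤ m₂ → m₂ ≤ m + 1 →
      |γ * (t * V m₁ b₁ + (1 - t) * V m₂ b₂) - γ * (t * U m₁ b₁ + (1 - t) * U m₂ b₂)| ≤
        γ * (E * ρ ^ (m + 1)) := by
    intro t ht₀ ht₁ m₁ b₁ m₂ b₂ h₁ h₂ h₃ h₄ h₅ h₆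
    rw [← mul_sub, abs_mul, abs_of_nonneg hγ]
    rw [add_sub_add_comm, ← mul_sub, ← mul_sub]
    gcongr
    exact abs_convexComb_le ht₀ ht₁ (near m₁ b₁ h₁ h₂ h₃) (near m₂ b₂ h₄ h₅ h₆)
  refine (abs_min_sub_min_le_max _ _ _ _).trans
    (max_le ?_ ((abs_min_sub_min_le_max _ _ _ _).trans (max_le ?_ ?_))) <;>
    simp only [Q0, Q1, Q2, add_sub_add_left_eq_sub]
  · exact mix _ hl0 hl0' _ _ _ _ le_rfl (by omega) le_rfl (by omega) (by omega) le_rfl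
  · exact mix _ hl1 hl1' _ _ _ _ (by omega) le_rfl (by omega) (by omega) (by omega) le_rfl
  · exact mix _ hl2 hl2' _ _ _ _ le_rfl (by omega) (by omega) (by omega) (by omega) le_rfl

theorem abs_sub_iterate_Tbell_le (hγ : 0 ≤ γ) (hl0 : 0 ≤ lam0) (hl0' : lam0 ≤ 1)
    (hl1 : 0 ≤ lam1) (hl1' : lam1 ≤ 1) (hl2 : 0 ≤ lam2) (hl2' : lam2 ≤ 1) {ρ C : ℝ}
    (hρ : 1 ≤ ρ) (hC : 0 ≤ C) {V : ℕ → ℕ → ℝ}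
    (hbound : ∀ m b : ℕ, 1 ≤ b → b ≤ m → |V m b| ≤ C * ρ ^ m)
    (hfix : ∀ m b : ℕ, 1 ≤ b → b ≤ m → V m b = Tbell γ lam0 lam1 lam2 c0 c1 c2 V m b) (n : ℕ) :
    ∀ m b : ℕ, 1 ≤ b → b ≤ m →
      |V m b - (Tbell γ lam0 lam1 lam2 c0 c1 c2)^[n] 0 m b| ≤ C * (γ * ρ) ^ n * ρ ^ m := by
  induction n with
  | zero => simpa using hbound
  | succ n ih =>
    intro m b hb hbm
    have hE : 0 ≤ C * (γ * ρ) ^ n := by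
      have : 0 ≤ γ * ρ := mul_nonneg hγ (zero_le_one.trans hρ)
      positivity
    rw [Function.iterate_succ_apply', hfix m b hb hbm]
    calc _ ≤ γ * (C * (γ * ρ) ^ n * ρ ^ (m + 1)) :=
          abs_Tbell_sub_Tbell_le hγ hl0 hl0' hl1 hl1' hl2 hl2' hρ hE ih hb hbm
      _ = C * (γ * ρ) ^ (n + 1) * ρ ^ m := by ring

theorem isMonotoneConcave_of_fixedPoint (hγ : 0 ≤ γ) (hl0 : 0 ≤ lam0) (hl0' : lam0 ≤ 1)
    (hl1 : 0 ≤ lam1) (hl1' : lam1 ≤ 1) (hl2 : 0 ≤ lam2) (hl2' : lam2 ≤ 1) {ρ C : ℝ}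
    (hρ : 1 ≤ ρ) (hγρ : γ * ρ < 1) {V : ℕ → ℕ → ℝ}
    (hbound : ∀ m b : ℕ, 1 ≤ b → b ≤ m → |V m b| ≤ C * ρ ^ m)
    (hfix : ∀ m b : ℕ, 1 ≤ b → b ≤ m → V m b = Tbell γ lam0 lam1 lam2 c0 c1 c2 V m b) :
    IsMonotoneConcave V := by
  have hC : 0 ≤ C := nonneg_of_mul_nonneg_left ((abs_nonneg _).trans (hbound 1 1 le_rfl le_rfl))
    (by positivity)
  refine IsMonotoneConcave.of_tendsto (W := fun n ↦ (Tbell γ lam0 lam1 lam2 c0 c1 c2)^[n] 0)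
    (fun n ↦ ?_) fun m b hb hbm ↦ ?_
  · induction n with
    | zero => exact isMonotoneConcave_zero
    | succ n ih =>
      rw [Function.iterate_succ_apply']
      exact ih.Tbell hγ hl0 hl0' hl1 hl1' hl2 hl2'
  · have hgeom : Tendsto (fun n : ℕ ↦ C * (γ * ρ) ^ n * ρ ^ m) atTop (𝓝 0) := by
      simpa using ((tendsto_pow_atTop_nhds_zero_of_lt_one
        (mul_nonneg hγ (zero_le_one.trans hρ)) hγρ).const_mul C).mul_const (ρ ^ m)
    rw [tendsto_iff_norm_sub_tendsto_zero]
    refine squeeze_zero (fun _ ↦ norm_nonneg _) (fun n ↦ ?_) hgeom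
    rw [Real.norm_eq_abs, abs_sub_comm]
    exact abs_sub_iterate_Tbell_le hγ hl0 hl0' hl1 hl1' hl2 hl2' hρ hC hbound hfix n m b hb hbm

theorem Tbell_diag_eq_Q0 (hγ : 0 ≤ γ) (hl0 : 0 ≤ lam0) (hl20 : lam2 ≤ lam0) (hc01 : c0 ≤ c1)
    (hc02 : c0 ≤ c2) {V : ℕ → ℕ → ℝ} {b : ℕ} (hV : V (b + 1) 1 ≤ V (b + 1) (b + 1)) :
    Tbell γ lam0 lam1 lam2 c0 c1 c2 V b b = Q0 γ lam0 c0 V b b := by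
  refine min_eq_left (le_min ?_ ?_) <;> simp only [Q0, Q1, Q2]
  · nlinarith [mul_nonneg (mul_nonneg hγ hl0) (sub_nonneg.2 hV)]
  · nlinarith [mul_nonneg (mul_nonneg hγ (sub_nonneg.2 hl20)) (sub_nonneg.2 hV)]

theorem diag_increment_le (hγ : 0 ≤ γ) (hl0 : 0 ≤ lam0) (hl0' : lam0 ≤ 1) (hl20 : lam2 ≤ lam0)
    (hc01 : c0 ≤ c1) (hc02 : c0 ≤ c2) {V : ℕ → ℕ → ℝ} (hV : IsMonotoneConcave V)
    (hfix : ∀ m b : ℕ, 1 ≤ b → b ≤ m → V m b = Tbell γ lam0 lam1 lam2 c0 c1 c2 V m b)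
    {b : ℕ} (hb : 1 ≤ b) :
    (1 - γ + γ * lam0) * (V (b + 1) (b + 1) - V b b) ≤
      1 + γ * lam0 * (V (b + 2) 1 - V (b + 1) 1) := by
  have hlow : V b b = Q0 γ lam0 c0 V b b := by
    rw [hfix b b hb le_rfl]
    exact Tbell_diag_eq_Q0 hγ hl0 hl20 hc01 hc02 (hV.mono _ _ _ _ le_rfl (by omega) le_rfl le_rfl)
  have hup : V (b + 1) (b + 1) ≤ Q0 γ lam0 c0 V (b + 1) (b + 1) := by
    rw [hfix _ _ (by omega) le_rfl]
    exact min_le_left _ _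
  have hconc := mul_le_mul_of_nonneg_left (hV.concave_diag b hb)
    (mul_nonneg hγ (sub_nonneg.2 hl0'))
  simp only [Q0] at hlow hup
  push_cast at hup
  linarith

end Bellman

theorem diagonal_gap_bound_general
    (γ lam0 lam1 lam2 c0 c1 c2 ρ : ℝ)
    (hγ0 : 0 < γ) (hγ1 : γ < 1)
    (hl0 : 0 < lam0) (hl0' : lam0 < 1)
    (hl1 : 0 < lam1) (hl1' : lam1 < 1)
    (hl2 : 0 < lam2) (hl2' : lam2 < 1)
    (hord1 : lam2 ≤ lam0)
    (hord3 : c0 ≤ c1) (hord4 : c1 ≤ c2)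
    (hρ1 : 1 < ρ) (hρ2 : ρ < 1 / γ)
    (Vstar : ℕ → ℕ → ℝ)
    (hnorm : ∃ C : ℝ, ∀ m b : ℕ, 1 ≤ b → b ≤ m → |Vstar m b| ≤ C * ρ ^ m)
    (hfix : ∀ m b : ℕ, 1 ≤ b → b ≤ m →
      Vstar m b = Tbell γ lam0 lam1 lam2 c0 c1 c2 Vstar m b) :
    ∀ b : ℕ, 1 ≤ b →
      (Vstar (b + 1) (b + 1) - Vstar b b) - (Vstar (b + 2) 1 - Vstar (b + 1) 1) ≤
        (1 - (1 - γ) * (Vstar (b + 2) 1 - Vstar (b + 1) 1)) / (1 - γ + γ * lam0) ∧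
      (Vstar (b + 1) (b + 1) - Vstar b b) - (Vstar (b + 2) 1 - Vstar (b + 1) 1) <
        1 / (γ * lam0) := by
  obtain ⟨C, hC⟩ := hnorm
  have hγρ : γ * ρ < 1 := by rwa [lt_div_iff₀ hγ0, mul_comm] at hρ2
  have hV : IsMonotoneConcave Vstar := isMonotoneConcave_of_fixedPoint hγ0.le hl0.le hl0'.le
    hl1.le hl1'.le hl2.le hl2'.le hρ1.le hγρ hC hfix
  intro b hb
  have hkey := diag_increment_le hγ0.le hl0.le hl0'.le hord1 hord3 (hord3.trans hord4) hV hfix hb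
  have hA : 0 ≤ Vstar (b + 2) 1 - Vstar (b + 1) 1 :=
    sub_nonneg.2 (hV.mono 1 1 _ _ le_rfl le_rfl (by omega) (by omega))
  set A := Vstar (b + 2) 1 - Vstar (b + 1) 1
  set B := Vstar (b + 1) (b + 1) - Vstar b b
  have hγl : 0 < γ * lam0 := mul_pos hγ0 hl0
  have hden : 0 < 1 - γ + γ * lam0 := by linarith
  have hfirst : B - A ≤ (1 - (1 - γ) * A) / (1 - γ + γ * lam0) := by
    rw [le_div_iff₀ hden]
    linarith
  refine ⟨hfirst, hfirst.trans_lt ?_⟩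
  calc _ ≤ 1 / (1 - γ + γ * lam0) := by gcongr; nlinarith
    _ < 1 / (γ * lam0) := one_div_lt_one_div_of_lt hγl (by linarith)

/-- With `A(b) = V★(b+2,1) − V★(b+1,1)` and
`B(b) = V★(b+1,b+1) − V★(b,b)`, for every `b ≥ 1`,
`B(b) − A(b) ≤ (1 − (1−γ)A(b))/(1 − γ + γλ0)` and `B(b) − A(b) < 1/(γλ0)`. -/
theorem diagonal_gap_bound
    (γ lam0 lam1 lam2 c0 c1 c2 ρ : ℝ)
    (hγ0 : 0 < γ) (hγ1 : γ < 1)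
    (hl0 : 0 < lam0) (hl0' : lam0 < 1)
    (hl1 : 0 < lam1) (hl1' : lam1 < 1)
    (hl2 : 0 < lam2) (hl2' : lam2 < 1)
    (hc0 : 0 ≤ c0) (hc1 : 0 ≤ c1) (hc2 : 0 ≤ c2)
    (hord1 : lam2 ≤ lam0) (hord2 : lam0 ≤ lam1)
    (hord3 : c0 ≤ c1) (hord4 : c1 ≤ c2)
    (hρ1 : 1 < ρ) (hρ2 : ρ < 1 / γ)
    (Vstar : ℕ → ℕ → ℝ)
    (hnorm : ∃ C : ℝ, ∀ m b : ℕ, 1 ≤ b → b ≤ m → |Vstar m b| ≤ C * ρ ^ m)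
    (hfix : ∀ m b : ℕ, 1 ≤ b → b ≤ m →
      Vstar m b = Tbell γ lam0 lam1 lam2 c0 c1 c2 Vstar m b) :
    ∀ b : ℕ, 1 ≤ b →
      (Vstar (b + 1) (b + 1) - Vstar b b) - (Vstar (b + 2) 1 - Vstar (b + 1) 1) ≤
        (1 - (1 - γ) * (Vstar (b + 2) 1 - Vstar (b + 1) 1)) / (1 - γ + γ * lam0) ∧
      (Vstar (b + 1) (b + 1) - Vstar b b) - (Vstar (b + 2) 1 - Vstar (b + 1) 1) <
        1 / (γ * lam0) :=
  diagonal_gap_bound_general γ lam0 lam1 lam2 c0 c1 c2 ρ hγ0 hγ1 hl0 hl0' hl1 hl1' hl2 hl2' hord1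
    hord3 hord4 hρ1 hρ2 Vstar hnorm hfix
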